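/- arXiv:1502.00682 — 5 statements merged into one kernel-verified Lean document; each statement's English description precedes it below -/
import Mathlib

section
/- If g divides both p + 2r and q + 2s (i.e., g is a factor by which the right weighted mediant (p+2r)/(q+2s) of p/q and r/s can be reduced), then g divides the cross-determinant qr - ps. -/
/-- The factor by which the right weighted mediant `(p+2r)/(q+2s)` of `p/q` and `r/s`
is reduced divides the cross-determinant `qr - ps`. -/
theorem right_mediant_reduction_dvd_crossDet (p q r s g : ℤ)
    (h1 : g ∣ p + 2 * r) (h2 : g ∣ q + 2 * s) : g ∣ q * r - p * s := by
  have := dvd_sub (h2.mul_left r) (h1.mul_left s)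
  have h : r * (q + 2 * s) - s * (p + 2 * r) = q * r - p * s := by ring
  rwa [h] at this
end

section
/- Every fraction in the unit k=3 Stern-Brocot tree with starting terms 0/1 and 1/1 has odd denominator: if a tree is defined by starting with the pair (0/1, 1/1) and repeatedly inserting between consecutive fractions p/q, r/s the reduced weighted mediants of (2p+r)/(2q+s) and (p+2r)/(q+2s), then every fraction in every row has odd denominator. -/
/-!
Odd denominators are preserved from one row to the next: the weighted mediants of `p/q` and
`r/s` have denominators `2q + s ≡ s` and `q + 2s ≡ q` modulo 2, and reducing to lowest terms
divides a denominator by a divisor of it, which leaves an odd number odd.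
-/

/-- Reduce a fraction (numerator, denominator) to lowest terms. -/
def reduceFrac (x : ℤ × ℤ) : ℤ × ℤ :=
  (x.1 / Int.gcd x.1 x.2, x.2 / Int.gcd x.1 x.2)

/-- The reduced left weighted mediant (k = 3) of two fractions. -/
def leftMediant (x y : ℤ × ℤ) : ℤ × ℤ :=
  reduceFrac (2 * x.1 + y.1, 2 * x.2 + y.2)

/-- The reduced right weighted mediant (k = 3) of two fractions. -/
def rightMediant (x y : ℤ × ℤ) : ℤ × ℤ :=
  reduceFrac (x.1 + 2 * y.1, x.2 + 2 * y.2)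

/-- Insert the two reduced weighted mediants between every pair of consecutive fractions. -/
def insertMediants : List (ℤ × ℤ) → List (ℤ × ℤ)
  | [] => []
  | [x] => [x]
  | x :: y :: rest => x :: leftMediant x y :: rightMediant x y :: insertMediants (y :: rest)

/-- The rows of the k = 3 Stern-Brocot tree with starting terms `x` and `y`. -/
def sbRow (x y : ℤ × ℤ) : ℕ → List (ℤ × ℤ)
  | 0 => [x, y]
  | n + 1 => insertMediants (sbRow x y n)

theorem Int.odd_ediv_gcd (a : ℤ) {b : ℤ} (hb : Odd b) : Odd (b / Int.gcd a b) := by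
  rw [← Int.ediv_mul_cancel (Int.gcd_dvd_right a b)] at hb
  exact (Int.odd_mul.mp hb).1

theorem odd_reduceFrac_snd {x : ℤ × ℤ} (h : Odd x.2) : Odd (reduceFrac x).2 :=
  Int.odd_ediv_gcd x.1 h

theorem odd_leftMediant_snd (x : ℤ × ℤ) {y : ℤ × ℤ} (hy : Odd y.2) :
    Odd (leftMediant x y).2 :=
  odd_reduceFrac_snd ((even_two_mul x.2).add_odd hy)

theorem odd_rightMediant_snd {x : ℤ × ℤ} (hx : Odd x.2) (y : ℤ × ℤ) :
    Odd (rightMediant x y).2 :=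
  odd_reduceFrac_snd (hx.add_even (even_two_mul y.2))

theorem odd_snd_of_mem_insertMediants {l : List (ℤ × ℤ)} (hl : ∀ z ∈ l, Odd z.2) :
    ∀ z ∈ insertMediants l, Odd z.2 := by
  induction l using insertMediants.induct with
  | case1 => simp [insertMediants]
  | case2 x => simpa [insertMediants] using hl
  | case3 x y rest ih =>
    have hx := hl x (by simp)
    have hy := hl y (by simp)
    intro z hz
    simp only [insertMediants, List.mem_cons] at hz
    rcases hz with rfl | rfl | rfl | hz
    · exact hx
    · exact odd_leftMediant_snd x hy
    · exact odd_rightMediant_snd hx y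
    · exact ih (fun w hw => hl w (List.mem_cons_of_mem x hw)) z hz

theorem odd_snd_of_mem_sbRow {x y : ℤ × ℤ} (hx : Odd x.2) (hy : Odd y.2) (n : ℕ) :
    ∀ z ∈ sbRow x y n, Odd z.2 := by
  induction n with
  | zero => simp [sbRow, hx, hy]
  | succ n ih => exact odd_snd_of_mem_insertMediants ih

/-- Every fraction in the unit k = 3 Stern-Brocot tree (starting terms 0/1 and 1/1)
has odd denominator. -/
theorem unit_tree_odd_denominators (n : ℕ) (z : ℤ × ℤ)
    (hz : z ∈ sbRow (0, 1) (1, 1) n) : Odd z.2 :=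
  odd_snd_of_mem_sbRow odd_one odd_one n z hz
end

section
/- In each row of the unit k=3 Stern-Brocot tree (starting terms 0/1 and 1/1), the numerators of consecutive fractions alternate in parity: the fraction at even index has even numerator and the fraction at odd index has odd numerator, and all denominators are odd. -/
/-
Reducing a fraction with odd denominator divides both terms by an odd number, which changes
neither parity. Hence, when both denominators are odd, the weighted mediants `(2p+r)/(2q+s)` and
`(p+2r)/(q+2s)` have odd denominators and numerators of the parity of `r` and of `p` respectively.
Inserting them between neighbours `p/q, r/s` of opposite numerator parity therefore keeps the
numerator parities alternating along the row, and by induction every row alternates like row 0.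
-/

lemma reduceFrac_parity {a b : ℤ} (hb : Odd b) :
    (Even (reduceFrac (a, b)).1 ↔ Even a) ∧ Odd (reduceFrac (a, b)).2 := by
  obtain ⟨c, hc⟩ := Int.gcd_dvd_left a b
  obtain ⟨d, hd⟩ := Int.gcd_dvd_right a b
  have hg : Odd (Int.gcd a b : ℤ) := (Int.odd_mul.mp (hd ▸ hb)).1
  have hg0 : (Int.gcd a b : ℤ) ≠ 0 := by rintro h; simp [h] at hg
  have hc' : a / Int.gcd a b = c := (Int.eq_ediv_of_mul_eq_right hg0 hc.symm).symm
  have hd' : b / Int.gcd a b = d := (Int.eq_ediv_of_mul_eq_right hg0 hd.symm).symm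
  simp only [reduceFrac]
  rw [hc', hd', hc, Int.even_mul, or_iff_right (Int.not_even_iff_odd.mpr hg)]
  exact ⟨Iff.rfl, (Int.odd_mul.mp (hd ▸ hb)).2⟩

lemma leftMediant_parity (x : ℤ × ℤ) {y : ℤ × ℤ} (hy : Odd y.2) :
    (Even (leftMediant x y).1 ↔ Even y.1) ∧ Odd (leftMediant x y).2 := by
  obtain ⟨hnum, hden⟩ := reduceFrac_parity (a := 2 * x.1 + y.1) ((even_two_mul x.2).add_odd hy)
  exact ⟨hnum.trans (by simp [Int.even_add]), hden⟩

lemma rightMediant_parity {x : ℤ × ℤ} (y : ℤ × ℤ) (hx : Odd x.2) :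
    (Even (rightMediant x y).1 ↔ Even x.1) ∧ Odd (rightMediant x y).2 := by
  obtain ⟨hnum, hden⟩ := reduceFrac_parity (a := x.1 + 2 * y.1) (hx.add_even (even_two_mul y.2))
  exact ⟨hnum.trans (by simp [Int.even_add]), hden⟩

def AlternatingFrom : Prop → List (ℤ × ℤ) → Prop
  | _, [] => True
  | e, x :: l => (Even x.1 ↔ e) ∧ Odd x.2 ∧ AlternatingFrom (¬e) l

lemma AlternatingFrom.insertMediants :
    ∀ {e : Prop} {l : List (ℤ × ℤ)},
      AlternatingFrom e l → AlternatingFrom e (insertMediants l)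
  | _, [], h => h
  | _, [_], h => h
  | e, x :: y :: l, ⟨hx, hxden, hy, hyden, hl⟩ => by
    obtain ⟨hL, hLden⟩ := leftMediant_parity x hyden
    obtain ⟨hR, hRden⟩ := rightMediant_parity y hxden
    have htail : AlternatingFrom (¬¬¬e) (_root_.insertMediants (y :: l)) := by
      simpa only [not_not] using
        AlternatingFrom.insertMediants (e := ¬e) (l := y :: l) ⟨hy, hyden, hl⟩
    exact ⟨hx, hxden, hL.trans hy, hLden, (hR.trans hx).trans not_not.symm, hRden, htail⟩

lemma AlternatingFrom.get :
    ∀ {e : Prop} {l : List (ℤ × ℤ)}, AlternatingFrom e l →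
      ∀ (i : ℕ) (h : i < l.length),
        (Even (l.get ⟨i, h⟩).1 ↔ (Even i ↔ e)) ∧ Odd (l.get ⟨i, h⟩).2
  | _, _ :: _, ⟨hx, hxden, _⟩, 0, _ => by simpa using ⟨hx, hxden⟩
  | _, _ :: _, ⟨_, _, hl⟩, i + 1, h => by
    obtain ⟨hi, hiden⟩ := hl.get i (Nat.lt_of_succ_lt_succ h)
    refine ⟨hi.trans ?_, hiden⟩
    rw [Nat.even_add_one]
    tauto

lemma alternatingFrom_sbRow (n : ℕ) : AlternatingFrom True (sbRow (0, 1) (1, 1) n) := by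
  induction n with
  | zero => exact ⟨by decide, by decide, by decide, by decide, trivial⟩
  | succ n ih => exact ih.insertMediants

/-- In each row of the unit k = 3 Stern-Brocot tree, numerators alternate in parity with
the index (even index ↔ even numerator) and all denominators are odd. -/
theorem unit_tree_alternating_numerators (n : ℕ) (i : ℕ)
    (h : i < (sbRow (0, 1) (1, 1) n).length) :
    (Even i ↔ Even ((sbRow (0, 1) (1, 1) n).get ⟨i, h⟩).1) ∧
    Odd ((sbRow (0, 1) (1, 1) n).get ⟨i, h⟩).2 := by
  obtain ⟨hnum, hden⟩ := (alternatingFrom_sbRow n).get i h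
  exact ⟨by simpa using hnum.symm, hden⟩
end

section
/- In any k=3 Stern-Brocot tree whose starting terms a/b, c/d are in lowest terms, every fraction x/y appearing in the tree satisfies (x, y) ≡ (a, b) (mod 2) componentwise or (x, y) ≡ (c, d) (mod 2) componentwise. -/
/-!
The parity vector `(x mod 2, y mod 2)` of a fraction in lowest terms is never `(0, 0)`. Modulo 2
the left mediant `(2x + y)` is congruent to its right parent and the right mediant `(x + 2y)` to
its left parent; in particular neither is `(0, 0)`, so the gcd removed by the reduction is odd and
does not change parities. Hence every fraction of the tree is in lowest terms and has the parity
vector of one of the two starting terms.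
-/

section Rows

variable (P : ℤ × ℤ → Prop)

theorem forall_mem_insertMediants
    (hmed : ∀ x y, P x → P y → P (leftMediant x y) ∧ P (rightMediant x y)) :
    ∀ l : List (ℤ × ℤ), (∀ z ∈ l, P z) → ∀ z ∈ insertMediants l, P z
  | [] => by simp [insertMediants]
  | [x] => by simp [insertMediants]
  | x :: y :: rest => by
    intro hl
    have hx : P x := hl x (by simp)
    have hy : P y := hl y (by simp)
    have hrest : ∀ z ∈ insertMediants (y :: rest), P z :=
      forall_mem_insertMediants hmed (y :: rest) fun z hz => hl z (List.mem_cons_of_mem x hz)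
    simpa [insertMediants, hx, hmed x y hx hy] using hrest

theorem forall_mem_sbRow {x y : ℤ × ℤ} (hx : P x) (hy : P y)
    (hmed : ∀ x y, P x → P y → P (leftMediant x y) ∧ P (rightMediant x y)) :
    ∀ n, ∀ z ∈ sbRow x y n, P z
  | 0 => by simp [sbRow, hx, hy]
  | n + 1 => forall_mem_insertMediants P hmed _ (forall_mem_sbRow hx hy hmed n)

end Rows

def SameParity (z w : ℤ × ℤ) : Prop :=
  z.1 % 2 = w.1 % 2 ∧ z.2 % 2 = w.2 % 2

theorem SameParity.trans {z w v : ℤ × ℤ} (h : SameParity z w) (h' : SameParity w v) :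
    SameParity z v :=
  ⟨h.1.trans h'.1, h.2.trans h'.2⟩

theorem Int.ediv_emod_two_of_odd_dvd {g u : ℤ} (hg : g % 2 = 1) (hgu : g ∣ u) :
    u / g % 2 = u % 2 := by
  obtain ⟨k, rfl⟩ := hgu
  rw [Int.mul_ediv_cancel_left _ (by omega), Int.mul_emod, hg]
  simp

theorem not_two_dvd_both_of_gcd_eq_one {u v : ℤ} (h : Int.gcd u v = 1) :
    ¬((2 : ℤ) ∣ u ∧ (2 : ℤ) ∣ v) := by
  rintro ⟨hu, hv⟩
  have := Int.dvd_coe_gcd hu hv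
  rw [h] at this
  norm_num at this

theorem reduceFrac_of_not_two_dvd_both {x : ℤ × ℤ} (hx : ¬((2 : ℤ) ∣ x.1 ∧ (2 : ℤ) ∣ x.2)) :
    Int.gcd (reduceFrac x).1 (reduceFrac x).2 = 1 ∧ SameParity (reduceFrac x) x := by
  have hodd : (Int.gcd x.1 x.2 : ℤ) % 2 = 1 := by
    by_contra h
    have h2 : (2 : ℤ) ∣ Int.gcd x.1 x.2 := by omega
    exact hx ⟨h2.trans (Int.gcd_dvd_left _ _), h2.trans (Int.gcd_dvd_right _ _)⟩
  exact ⟨Int.gcd_div_gcd_div_gcd (by omega),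
    Int.ediv_emod_two_of_odd_dvd hodd (Int.gcd_dvd_left _ _),
    Int.ediv_emod_two_of_odd_dvd hodd (Int.gcd_dvd_right _ _)⟩

theorem reduceFrac_spec_of_sameParity {x y : ℤ × ℤ} (hy : Int.gcd y.1 y.2 = 1)
    (hxy : SameParity x y) :
    Int.gcd (reduceFrac x).1 (reduceFrac x).2 = 1 ∧ SameParity (reduceFrac x) y := by
  have hx : ¬((2 : ℤ) ∣ x.1 ∧ (2 : ℤ) ∣ x.2) := by
    have := not_two_dvd_both_of_gcd_eq_one hy
    unfold SameParity at hxy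
    omega
  obtain ⟨hgcd, hpar⟩ := reduceFrac_of_not_two_dvd_both hx
  exact ⟨hgcd, hpar.trans hxy⟩

theorem leftMediant_spec (x : ℤ × ℤ) {y : ℤ × ℤ} (hy : Int.gcd y.1 y.2 = 1) :
    Int.gcd (leftMediant x y).1 (leftMediant x y).2 = 1 ∧ SameParity (leftMediant x y) y :=
  reduceFrac_spec_of_sameParity hy ⟨by omega, by omega⟩

theorem rightMediant_spec {x : ℤ × ℤ} (y : ℤ × ℤ) (hx : Int.gcd x.1 x.2 = 1) :
    Int.gcd (rightMediant x y).1 (rightMediant x y).2 = 1 ∧ SameParity (rightMediant x y) x :=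
  reduceFrac_spec_of_sameParity hx ⟨by omega, by omega⟩

/-- In the k = 3 Stern-Brocot tree with starting terms `a/b`, `c/d` in lowest terms, every
fraction `(x, y)` satisfies `(x, y) ≡ (a, b) (mod 2)` or `(x, y) ≡ (c, d) (mod 2)`
componentwise. -/
theorem tree_parity_classes (a b c d : ℤ) (hab : Int.gcd a b = 1) (hcd : Int.gcd c d = 1)
    (n : ℕ) (z : ℤ × ℤ) (hz : z ∈ sbRow (a, b) (c, d) n) :
    (z.1 % 2 = a % 2 ∧ z.2 % 2 = b % 2) ∨ (z.1 % 2 = c % 2 ∧ z.2 % 2 = d % 2) := by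
  let P (w : ℤ × ℤ) : Prop :=
    Int.gcd w.1 w.2 = 1 ∧ (SameParity w (a, b) ∨ SameParity w (c, d))
  have hmed : ∀ x y, P x → P y → P (leftMediant x y) ∧ P (rightMediant x y) := by
    rintro x y ⟨hx, hxp⟩ ⟨hy, hyp⟩
    obtain ⟨hl, hlp⟩ := leftMediant_spec x hy
    obtain ⟨hr, hrp⟩ := rightMediant_spec y hx
    exact ⟨⟨hl, hyp.imp hlp.trans hlp.trans⟩, ⟨hr, hxp.imp hrp.trans hrp.trans⟩⟩
  have hab' : P (a, b) := ⟨hab, .inl ⟨rfl, rfl⟩⟩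
  have hcd' : P (c, d) := ⟨hcd, .inr ⟨rfl, rfl⟩⟩
  exact (forall_mem_sbRow P hab' hcd' hmed n z hz).2
end

section
/- If p/q ≤ x/y ≤ r/s with q, s, y > 0 and the modulus m(x/y) = (qx - py) + (ry - sx) equals 1, then x/y equals p/q or x/y equals r/s as rational numbers. -/
/-- If `p/q ≤ x/y ≤ r/s` and the modulus `(qx - py) + (ry - sx)` equals 1, then `x/y`
coincides with one of the endpoints. -/
theorem modulus_one_endpoint (p q r s x y : ℤ) (hq : 0 < q) (hs : 0 < s) (hy : 0 < y)
    (hpx : (p : ℚ) / q ≤ (x : ℚ) / y) (hxr : (x : ℚ) / y ≤ (r : ℚ) / s)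
    (hm : (q * x - p * y) + (r * y - s * x) = 1) :
    (x : ℚ) / y = (p : ℚ) / q ∨ (x : ℚ) / y = (r : ℚ) / s := by
  have hq' : (0:ℚ) < q := by exact_mod_cast hq
  have hs' : (0:ℚ) < s := by exact_mod_cast hs
  have hy' : (0:ℚ) < y := by exact_mod_cast hy
  rw [div_le_div_iff₀ hq' hy'] at hpx
  rw [div_le_div_iff₀ hy' hs'] at hxr
  have h1 : (0:ℤ) ≤ q * x - p * y := by
    have : (p:ℚ) * y ≤ q * x := by linarith [mul_comm (x:ℚ) q]
    have := (by exact_mod_cast this : p * y ≤ q * x); omega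
  have h2 : (0:ℤ) ≤ r * y - s * x := by
    have : (s:ℚ) * x ≤ r * y := by linarith [mul_comm (x:ℚ) s, mul_comm (r:ℚ) y]
    have := (by exact_mod_cast this : s * x ≤ r * y); omega
  rcases (by omega : q * x - p * y = 0 ∨ r * y - s * x = 0) with h | h
  · left
    rw [div_eq_div_iff hy'.ne' hq'.ne']
    have : q * x = p * y := by omega
    have : (q:ℚ) * x = p * y := by exact_mod_cast this
    linarith [mul_comm (x:ℚ) q, mul_comm (p:ℚ) y]
  · right
    rw [div_eq_div_iff hy'.ne' hs'.ne']
    have : r * y = s * x := by omega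
    have : (r:ℚ) * y = s * x := by exact_mod_cast this
    linarith [mul_comm (x:ℚ) s, mul_comm (r:ℚ) y]
end
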